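/- arXiv:1806.06248 — 3 statements merged into one kernel-verified Lean document; each statement's English description precedes it below -/
import Mathlib

section
/- Let X, Y be Banach spaces and F : X → Y* be continuously differentiable. Suppose u_0 ∈ X is a regular solution of F(u) = 0, i.e., F(u_0) = 0 and DF(u_0) is a linear homeomorphism from X to Y*. Assume DF is Lipschitz at u_0 with constant γ on the ball B(u_0, R_0), i.e., ‖DF(u) − DF(u_0)‖ ≤ γ‖u − u_0‖ for all u ∈ B(u_0, R_0). Set R = min{R_0, γ^{-1}‖DF(u_0)^{-1}‖^{-1}, 2γ^{-1}‖DF(u_0)‖}. Then for all u ∈ B(u_0, R), (1/2)‖DF(u_0)‖^{-1}‖F(u)‖_{Y*} ≤ ‖u − u_0‖_X ≤ 2‖DF(u_0)^{-1}‖‖F(u)‖_{Y*}. -/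
/-!
Write `w = u - u0`. Along the segment `t ↦ u0 + t • w` the map `t ↦ F (u0 + t • w) - t • DF u0 w`
has derivative `(DF (u0 + t • w) - DF u0) w`, of norm at most `γ t ‖w‖²`, so comparison with
`γ t² ‖w‖² / 2` bounds the Taylor remainder `‖F u - DF u0 w‖` by `γ ‖w‖² / 2`. The two
conditions on the radius make this remainder at most `‖DF u0‖ ‖w‖`, resp. `‖w‖ / (2 ‖DF u0⁻¹‖)`,
and the triangle inequality turns these into the two bounds.
-/

open Metric Set

section

variable {E G : Type*} [NormedAddCommGroup E] [NormedSpace ℝ E]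
  [NormedAddCommGroup G] [NormedSpace ℝ G]

theorem norm_sub_sub_fderiv_le_of_fderiv_lipschitzAt {f : E → G} {f' : E → E →L[ℝ] G}
    {x₀ x : E} {r γ : ℝ} (hf : ∀ y ∈ ball x₀ r, HasFDerivAt f (f' y) y)
    (hLip : ∀ y ∈ ball x₀ r, ‖f' y - f' x₀‖ ≤ γ * ‖y - x₀‖) (hx : x ∈ ball x₀ r) :
    ‖f x - f x₀ - f' x₀ (x - x₀)‖ ≤ γ / 2 * ‖x - x₀‖ ^ 2 := by
  set w := x - x₀
  have hseg : ∀ t ∈ Icc (0 : ℝ) 1, x₀ + t • w ∈ ball x₀ r := by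
    rintro t ⟨ht₀, ht₁⟩
    rw [mem_ball_iff_norm] at hx ⊢
    calc ‖x₀ + t • w - x₀‖ = t * ‖w‖ := by
          rw [add_sub_cancel_left, norm_smul, Real.norm_of_nonneg ht₀]
      _ ≤ ‖w‖ := mul_le_of_le_one_left (norm_nonneg _) ht₁
      _ < r := hx
  have hφ : ∀ t ∈ Icc (0 : ℝ) 1, HasDerivAt (fun t : ℝ => f (x₀ + t • w) - f x₀ - t • f' x₀ w)
      ((f' (x₀ + t • w) - f' x₀) w) t := by
    intro t ht
    have hline : HasDerivAt (fun t : ℝ => x₀ + t • w) w t := by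
      simpa using ((hasDerivAt_id t).smul_const w).const_add x₀
    have := (((hf _ (hseg t ht)).comp_hasDerivAt t hline).sub_const (f x₀)).sub
      ((hasDerivAt_id t).smul_const (f' x₀ w))
    convert this using 1
    · rfl
    · simp
  have hB : ∀ t : ℝ, HasDerivAt (fun t : ℝ => γ / 2 * ‖w‖ ^ 2 * t ^ 2) (γ * ‖w‖ ^ 2 * t) t :=
    fun t => ((hasDerivAt_pow 2 t).const_mul (γ / 2 * ‖w‖ ^ 2)).congr_deriv (by norm_num; ring)
  have hbound : ∀ t ∈ Ico (0 : ℝ) 1, ‖(f' (x₀ + t • w) - f' x₀) w‖ ≤ γ * ‖w‖ ^ 2 * t := by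
    intro t ht
    have hmem := hseg t (Ico_subset_Icc_self ht)
    calc ‖(f' (x₀ + t • w) - f' x₀) w‖ ≤ ‖f' (x₀ + t • w) - f' x₀‖ * ‖w‖ :=
          ContinuousLinearMap.le_opNorm _ _
      _ ≤ γ * ‖x₀ + t • w - x₀‖ * ‖w‖ := by gcongr; exact hLip _ hmem
      _ = γ * ‖w‖ ^ 2 * t := by
        rw [add_sub_cancel_left, norm_smul, Real.norm_of_nonneg ht.1]; ring
  have hend := image_norm_le_of_norm_deriv_right_le_deriv_boundary
    (fun t ht => (hφ t ht).continuousAt.continuousWithinAt)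
    (fun t ht => (hφ t (Ico_subset_Icc_self ht)).hasDerivWithinAt) (by simp) hB hbound
    (right_mem_Icc.2 zero_le_one)
  simpa [w] using hend

theorem norm_le_two_mul_opNorm_mul_of_norm_sub_le (A : E →L[ℝ] G) {y : G} {w : E} {γ : ℝ}
    (hrem : ‖y - A w‖ ≤ γ / 2 * ‖w‖ ^ 2) (hw : γ * ‖w‖ ≤ 2 * ‖A‖) :
    ‖y‖ ≤ 2 * ‖A‖ * ‖w‖ :=
  calc ‖y‖ ≤ ‖A w‖ + ‖y - A w‖ := norm_le_insert' y (A w)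
    _ ≤ ‖A‖ * ‖w‖ + γ * ‖w‖ / 2 * ‖w‖ := by
        gcongr
        · exact A.le_opNorm w
        · linarith
    _ ≤ ‖A‖ * ‖w‖ + ‖A‖ * ‖w‖ := by gcongr; linarith
    _ = 2 * ‖A‖ * ‖w‖ := by ring

theorem norm_le_two_mul_norm_symm_mul_of_norm_sub_le (e : E ≃L[ℝ] G) {y : G} {w : E} {γ : ℝ}
    (hrem : ‖y - e w‖ ≤ γ / 2 * ‖w‖ ^ 2)
    (hw : γ * ‖(e.symm : G →L[ℝ] E)‖ * ‖w‖ ≤ 1) :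
    ‖w‖ ≤ 2 * ‖(e.symm : G →L[ℝ] E)‖ * ‖y‖ := by
  set M := ‖(e.symm : G →L[ℝ] E)‖
  have hhalf : ‖w‖ ≤ M * ‖y‖ + ‖w‖ / 2 :=
    calc ‖w‖ = ‖(e.symm : G →L[ℝ] E) (e w)‖ := by simp
      _ ≤ M * ‖e w‖ := ContinuousLinearMap.le_opNorm _ _
      _ ≤ M * (‖y‖ + γ / 2 * ‖w‖ ^ 2) := by
          gcongr
          calc ‖e w‖ ≤ ‖y‖ + ‖y - e w‖ := norm_le_insert y (e w)
            _ ≤ ‖y‖ + γ / 2 * ‖w‖ ^ 2 := by gcongr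
      _ = M * ‖y‖ + γ * M * ‖w‖ * (‖w‖ / 2) := by ring
      _ ≤ M * ‖y‖ + ‖w‖ / 2 := by gcongr; exact mul_le_of_le_one_left (by positivity) hw
  linarith

end

theorem verfurth_two_sided_bound_general
    {X Y : Type*} [NormedAddCommGroup X] [NormedSpace ℝ X]
    [NormedAddCommGroup Y] [NormedSpace ℝ Y]
    (F : X → (Y →L[ℝ] ℝ)) (DF : X → (X →L[ℝ] (Y →L[ℝ] ℝ)))
    (hDF : ∀ u, HasFDerivAt F (DF u) u)
    (u0 : X) (hroot : F u0 = 0)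
    (e : X ≃L[ℝ] (Y →L[ℝ] ℝ)) (he : (e : X →L[ℝ] (Y →L[ℝ] ℝ)) = DF u0)
    (γ R0 : ℝ) (hγ : 0 < γ)
    (hLip : ∀ u, ‖u - u0‖ < R0 → ‖DF u - DF u0‖ ≤ γ * ‖u - u0‖) :
    ∀ u, ‖u - u0‖ < min R0 (min (γ⁻¹ * ‖(e.symm : (Y →L[ℝ] ℝ) →L[ℝ] X)‖⁻¹)
        (2 * γ⁻¹ * ‖DF u0‖)) →
      (1 / 2) * ‖DF u0‖⁻¹ * ‖F u‖ ≤ ‖u - u0‖ ∧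
      ‖u - u0‖ ≤ 2 * ‖(e.symm : (Y →L[ℝ] ℝ) →L[ℝ] X)‖ * ‖F u‖ := by
  intro u hu
  simp only [lt_min_iff] at hu
  obtain ⟨huR0, hu_symm, hu_DF⟩ := hu
  set M := ‖(e.symm : (Y →L[ℝ] ℝ) →L[ℝ] X)‖
  have hrem : ‖F u - DF u0 (u - u0)‖ ≤ γ / 2 * ‖u - u0‖ ^ 2 := by
    simpa [hroot] using norm_sub_sub_fderiv_le_of_fderiv_lipschitzAt (fun y _ => hDF y)
      (fun y hy => hLip y (mem_ball_iff_norm.mp hy)) (mem_ball_iff_norm.mpr huR0)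
  have hw_DF : γ * ‖u - u0‖ ≤ 2 * ‖DF u0‖ :=
    ((lt_inv_mul_iff₀ hγ).mp (by linarith)).le
  have hw_symm : γ * M * ‖u - u0‖ ≤ 1 :=
    calc γ * M * ‖u - u0‖ ≤ γ * M * (γ⁻¹ * M⁻¹) := by gcongr
      _ = γ * γ⁻¹ * (M * M⁻¹) := by ring
      _ ≤ 1 := by rw [mul_inv_cancel₀ hγ.ne', one_mul]; exact mul_inv_le_one
  constructor
  · calc 1 / 2 * ‖DF u0‖⁻¹ * ‖F u‖
        ≤ 1 / 2 * ‖DF u0‖⁻¹ * (2 * ‖DF u0‖ * ‖u - u0‖) := by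
          gcongr; exact norm_le_two_mul_opNorm_mul_of_norm_sub_le _ hrem hw_DF
      _ = ‖DF u0‖⁻¹ * ‖DF u0‖ * ‖u - u0‖ := by ring
      _ ≤ ‖u - u0‖ := mul_le_of_le_one_left (norm_nonneg _) inv_mul_le_one
  · rw [← he] at hrem
    exact norm_le_two_mul_norm_symm_mul_of_norm_sub_le e hrem hw_symm

/-- Proposition 3.4 (Verfürth): two-sided a posteriori error bound near a regular
solution `u0` of `F u = 0`, where `F : X → Y*` is `C¹` with derivative `DF`,
`DF u0` is a linear homeomorphism (given by the equivalence `e`), and `DF` is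
Lipschitz at `u0` with constant `γ` on the ball of radius `R0`. -/
theorem verfurth_two_sided_bound
    {X Y : Type*} [NormedAddCommGroup X] [NormedSpace ℝ X] [CompleteSpace X]
    [NormedAddCommGroup Y] [NormedSpace ℝ Y] [CompleteSpace Y]
    (F : X → (Y →L[ℝ] ℝ)) (DF : X → (X →L[ℝ] (Y →L[ℝ] ℝ)))
    (hF : ContDiff ℝ 1 F) (hDF : ∀ u, HasFDerivAt F (DF u) u)
    (u0 : X) (hroot : F u0 = 0)
    (e : X ≃L[ℝ] (Y →L[ℝ] ℝ)) (he : (e : X →L[ℝ] (Y →L[ℝ] ℝ)) = DF u0)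
    (γ R0 : ℝ) (hγ : 0 < γ) (hR0 : 0 < R0)
    (hLip : ∀ u, ‖u - u0‖ < R0 → ‖DF u - DF u0‖ ≤ γ * ‖u - u0‖) :
    ∀ u, ‖u - u0‖ < min R0 (min (γ⁻¹ * ‖(e.symm : (Y →L[ℝ] ℝ) →L[ℝ] X)‖⁻¹)
        (2 * γ⁻¹ * ‖DF u0‖)) →
      (1 / 2) * ‖DF u0‖⁻¹ * ‖F u‖ ≤ ‖u - u0‖ ∧
      ‖u - u0‖ ≤ 2 * ‖(e.symm : (Y →L[ℝ] ℝ) →L[ℝ] X)‖ * ‖F u‖ :=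
  verfurth_two_sided_bound_general F DF hDF u0 hroot e he γ R0 hγ hLip
end

section
/- Upper bound half of Proposition 3.4 (Verfürth): Let X, Y be Banach spaces, F : X → Y* continuously differentiable with F(u_0) = 0 and DF(u_0) invertible (a linear homeomorphism). If ‖DF(u) − DF(u_0)‖ ≤ γ‖u − u_0‖ for all u with ‖u − u_0‖ < R_0, then for every u with ‖u − u_0‖ ≤ min{R_0, (2γ)^{-1}‖DF(u_0)^{-1}‖^{-1}}, one has ‖u − u_0‖_X ≤ 2‖DF(u_0)^{-1}‖ · ‖F(u)‖_{Y*}. -/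
/-!
Linearise `F` at the root `u0`: along the segment from `u0` to `u` the derivative stays within
`γ ‖u - u0‖` of `DF u0`, so the mean value inequality gives
`‖F u - DF u0 (u - u0)‖ ≤ γ ‖u - u0‖²`. Inverting `DF u0` then yields
`‖u - u0‖ ≤ ‖DF u0⁻¹‖ (‖F u‖ + γ ‖u - u0‖²)`, and on the stated ball the quadratic term
is at most `‖u - u0‖ / 2`, which is absorbed into the left-hand side.
-/

open Set

section MeanValue

variable {E G : Type*} [NormedAddCommGroup E] [NormedSpace ℝ E]
  [NormedAddCommGroup G] [NormedSpace ℝ G]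

/-- `y` itself is exempt from the derivative bound: in Verfürth's estimate it may lie on the
sphere of radius `R0`, where the Lipschitz hypothesis is not available. -/
theorem norm_sub_sub_fderiv_le_of_norm_fderiv_sub_le {f : E → G} {f' : E → E →L[ℝ] G}
    {x y : E} {C : ℝ}
    (hf : ∀ t ∈ Icc (0 : ℝ) 1, HasFDerivAt f (f' (x + t • (y - x))) (x + t • (y - x)))
    (hbound : ∀ t ∈ Ico (0 : ℝ) 1, ‖f' (x + t • (y - x)) - f' x‖ ≤ C) :
    ‖f y - f x - f' x (y - x)‖ ≤ C * ‖y - x‖ := by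
  set g : ℝ → G := fun t => f (x + t • (y - x)) - t • f' x (y - x)
  have hg : ∀ t ∈ Icc (0 : ℝ) 1,
      HasDerivWithinAt g (f' (x + t • (y - x)) (y - x) - f' x (y - x)) (Icc 0 1) t := by
    intro t ht
    have hline : HasDerivAt (fun s : ℝ => x + s • (y - x)) (y - x) t := by
      simpa using ((hasDerivAt_id t).smul_const (y - x)).const_add x
    have := ((hf t ht).comp_hasDerivAt t hline).sub ((hasDerivAt_id t).smul_const (f' x (y - x)))
    rw [one_smul] at this
    exact this.hasDerivWithinAt
  have hg' : ∀ t ∈ Ico (0 : ℝ) 1, ‖f' (x + t • (y - x)) (y - x) - f' x (y - x)‖ ≤ C * ‖y - x‖ :=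
    fun t ht => ((f' _ - f' x).le_opNorm (y - x)).trans
      (mul_le_mul_of_nonneg_right (hbound t ht) (norm_nonneg _))
  have := norm_image_sub_le_of_norm_deriv_le_segment_01' hg hg'
  simp only [g, one_smul, zero_smul, add_zero, sub_zero, add_sub_cancel] at this
  rwa [sub_right_comm]

end MeanValue

theorem ContinuousLinearEquiv.one_sub_mul_norm_le {𝕜 E G : Type*} [NontriviallyNormedField 𝕜]
    [NormedAddCommGroup E] [NormedSpace 𝕜 E] [NormedAddCommGroup G] [NormedSpace 𝕜 G]
    (e : E ≃L[𝕜] G) (h : E) (w : G) {ε : ℝ} (hw : ‖w - e h‖ ≤ ε * ‖h‖) :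
    (1 - ‖(e.symm : G →L[𝕜] E)‖ * ε) * ‖h‖ ≤ ‖(e.symm : G →L[𝕜] E)‖ * ‖w‖ := by
  set N := ‖(e.symm : G →L[𝕜] E)‖
  have hinv : ‖h‖ ≤ N * ‖e h‖ := by
    simpa using (e.symm : G →L[𝕜] E).le_opNorm (e h)
  have happrox : ‖e h‖ ≤ ‖w‖ + ε * ‖h‖ := by
    have := norm_sub_norm_le (e h) w
    rw [norm_sub_rev] at this
    linarith
  nlinarith [norm_nonneg (e.symm : G →L[𝕜] E)]

theorem mul_mul_le_half_of_le_inv_mul_inv {γ N r : ℝ} (hγ : 0 < γ) (hN : 0 ≤ N)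
    (hr : r ≤ (2 * γ)⁻¹ * N⁻¹) : N * γ * r ≤ 1 / 2 := by
  rcases hN.eq_or_lt with rfl | hN
  · norm_num
  calc N * γ * r ≤ N * γ * ((2 * γ)⁻¹ * N⁻¹) := by gcongr
    _ = 1 / 2 := by field_simp

theorem verfurth_upper_bound_general
    {X Y : Type*} [NormedAddCommGroup X] [NormedSpace ℝ X] [CompleteSpace X]
    [NormedAddCommGroup Y] [NormedSpace ℝ Y] [CompleteSpace Y]
    (F : X → (Y →L[ℝ] ℝ)) (DF : X → (X →L[ℝ] (Y →L[ℝ] ℝ)))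
    (hDF : ∀ u, HasFDerivAt F (DF u) u)
    (u0 : X) (hroot : F u0 = 0)
    (e : X ≃L[ℝ] (Y →L[ℝ] ℝ)) (he : (e : X →L[ℝ] (Y →L[ℝ] ℝ)) = DF u0)
    (γ R0 : ℝ) (hγ : 0 < γ) (hR0 : 0 < R0)
    (hLip : ∀ u, ‖u - u0‖ < R0 → ‖DF u - DF u0‖ ≤ γ * ‖u - u0‖) :
    ∀ u, ‖u - u0‖ ≤ min R0 ((2 * γ)⁻¹ * ‖(e.symm : (Y →L[ℝ] ℝ) →L[ℝ] X)‖⁻¹) →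
      ‖u - u0‖ ≤ 2 * ‖(e.symm : (Y →L[ℝ] ℝ) →L[ℝ] X)‖ * ‖F u‖ := by
  intro u hu
  set r := ‖u - u0‖
  set N := ‖(e.symm : (Y →L[ℝ] ℝ) →L[ℝ] X)‖
  have hrR0 : r ≤ R0 := hu.trans (min_le_left _ _)
  have hsegment : ∀ t ∈ Ico (0 : ℝ) 1, ‖DF (u0 + t • (u - u0)) - DF u0‖ ≤ γ * r := by
    intro t ⟨ht0, ht1⟩
    have hdist : ‖u0 + t • (u - u0) - u0‖ = t * r := by
      rw [add_sub_cancel_left, norm_smul, Real.norm_of_nonneg ht0]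
    calc ‖DF (u0 + t • (u - u0)) - DF u0‖ ≤ γ * (t * r) :=
          hdist ▸ hLip _ (hdist ▸ by nlinarith [norm_nonneg (u - u0)])
      _ ≤ γ * r := by gcongr; nlinarith [norm_nonneg (u - u0)]
  have hlin : ‖F u - e (u - u0)‖ ≤ γ * r * r := by
    have := norm_sub_sub_fderiv_le_of_norm_fderiv_sub_le (fun t _ => hDF _) hsegment
    rwa [hroot, sub_zero, ← he] at this
  have habsorb := e.one_sub_mul_norm_le (u - u0) (F u) hlin
  have hsmall : N * γ * r ≤ 1 / 2 :=
    mul_mul_le_half_of_le_inv_mul_inv hγ (by positivity) (hu.trans (min_le_right _ _))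
  nlinarith [norm_nonneg (u - u0)]

/-- Upper bound half of Proposition 3.4 (Verfürth). -/
theorem verfurth_upper_bound
    {X Y : Type*} [NormedAddCommGroup X] [NormedSpace ℝ X] [CompleteSpace X]
    [NormedAddCommGroup Y] [NormedSpace ℝ Y] [CompleteSpace Y]
    (F : X → (Y →L[ℝ] ℝ)) (DF : X → (X →L[ℝ] (Y →L[ℝ] ℝ)))
    (hF : ContDiff ℝ 1 F) (hDF : ∀ u, HasFDerivAt F (DF u) u)
    (u0 : X) (hroot : F u0 = 0)
    (e : X ≃L[ℝ] (Y →L[ℝ] ℝ)) (he : (e : X →L[ℝ] (Y →L[ℝ] ℝ)) = DF u0)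
    (γ R0 : ℝ) (hγ : 0 < γ) (hR0 : 0 < R0)
    (hLip : ∀ u, ‖u - u0‖ < R0 → ‖DF u - DF u0‖ ≤ γ * ‖u - u0‖) :
    ∀ u, ‖u - u0‖ ≤ min R0 ((2 * γ)⁻¹ * ‖(e.symm : (Y →L[ℝ] ℝ) →L[ℝ] X)‖⁻¹) →
      ‖u - u0‖ ≤ 2 * ‖(e.symm : (Y →L[ℝ] ℝ) →L[ℝ] X)‖ * ‖F u‖ :=
  verfurth_upper_bound_general F DF hDF u0 hroot e he γ R0 hγ hR0 hLip
end

section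
/- Let X, Y be Banach spaces, X_h ⊂ X, Y_h ⊂ Y closed subspaces, F : X → Y* continuous, F_h : X_h → Y_h*, R_h ∈ L(Y, Y_h) a bounded linear restriction operator, Ỹ_h ⊂ Y a subspace, and F̃_h : X_h → Y* a map. Suppose ‖(Id_Y − R_h)* F̃_h(u_h)‖_{Y*} ≤ C_0 ‖F̃_h(u_h)‖_{Ỹ_h*}. Then ‖F(u_h)‖_{Y*} ≤ C_0 ‖F̃_h(u_h)‖_{Ỹ_h*} + ‖(Id_Y − R_h)*[F(u_h) − F̃_h(u_h)]‖_{Y*} + ‖R_h‖ · ‖F(u_h) − F_h(u_h)‖_{Y_h*} + ‖R_h‖ · ‖F_h(u_h)‖_{Y_h*}, where for G ∈ Y*, (Id_Y − R_h)*G denotes the functional y ↦ G(y − R_h y), and ‖G‖_{Y_h*} denotes the norm of the restriction of G to Y_h. -/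
open ContinuousLinearMap

/-! Every functional `G ∈ Y*` splits as `G ∘ (Id − ι R) + (G ∘ ι) ∘ R`, where `ι` is the
inclusion of `Y_h`. The first part is estimated by inserting `F̃_h(u_h)` and using the
hypothesis, the second by `‖R_h‖ ‖G ∘ ι‖` after inserting `F_h(u_h)`. -/

namespace ContinuousLinearMap

variable {𝕜 E V W : Type*} [NontriviallyNormedField 𝕜]
  [SeminormedAddCommGroup E] [NormedSpace 𝕜 E] [SeminormedAddCommGroup V] [NormedSpace 𝕜 V]
  [SeminormedAddCommGroup W] [NormedSpace 𝕜 W]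

theorem comp_id_sub_add_comp_comp (G : E →L[𝕜] W) (ι : V →L[𝕜] E) (R : E →L[𝕜] V) :
    G.comp (ContinuousLinearMap.id 𝕜 E - ι.comp R) + (G.comp ι).comp R = G := by
  ext y
  simp

theorem norm_le_norm_comp_id_sub_add (G : E →L[𝕜] W) (ι : V →L[𝕜] E) (R : E →L[𝕜] V) :
    ‖G‖ ≤ ‖G.comp (ContinuousLinearMap.id 𝕜 E - ι.comp R)‖ + ‖R‖ * ‖G.comp ι‖ := by
  nth_rw 1 [← comp_id_sub_add_comp_comp G ι R]
  calc _ ≤ ‖G.comp (ContinuousLinearMap.id 𝕜 E - ι.comp R)‖ + ‖G.comp ι‖ * ‖R‖ :=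
        norm_add_le_of_le le_rfl (opNorm_comp_le _ _)
    _ = _ := by rw [mul_comm]

theorem norm_comp_le_norm_comp_add_norm_sub_comp (G H : E →L[𝕜] W) (T : V →L[𝕜] E) :
    ‖G.comp T‖ ≤ ‖H.comp T‖ + ‖(G - H).comp T‖ := by
  simpa only [sub_comp, add_sub_cancel] using norm_add_le (H.comp T) ((G - H).comp T)

end ContinuousLinearMap

theorem residual_dual_norm_splitting_general
    {X Y : Type*} [NormedAddCommGroup X] [NormedSpace ℝ X]
    [NormedAddCommGroup Y] [NormedSpace ℝ Y]
    (Xh : Submodule ℝ X) (Yh : Submodule ℝ Y)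
    (F : X → (Y →L[ℝ] ℝ))
    (Fh : Xh → (Yh →L[ℝ] ℝ))
    (Rh : Y →L[ℝ] Yh)
    (Ytilh : Submodule ℝ Y)
    (Fth : Xh → (Y →L[ℝ] ℝ))
    (uh : Xh) (C0 : ℝ)
    (hbound : ‖(Fth uh).comp (ContinuousLinearMap.id ℝ Y - Yh.subtypeL.comp Rh)‖ ≤
        C0 * ‖(Fth uh).comp Ytilh.subtypeL‖) :
    ‖F (uh : X)‖ ≤ C0 * ‖(Fth uh).comp Ytilh.subtypeL‖
      + ‖(F (uh : X) - Fth uh).comp (ContinuousLinearMap.id ℝ Y - Yh.subtypeL.comp Rh)‖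
      + ‖Rh‖ * ‖(F (uh : X)).comp Yh.subtypeL - Fh uh‖
      + ‖Rh‖ * ‖Fh uh‖ := by
  set A := ContinuousLinearMap.id ℝ Y - Yh.subtypeL.comp Rh
  have hrestricted :
      ‖(F uh).comp Yh.subtypeL‖ ≤ ‖(F uh).comp Yh.subtypeL - Fh uh‖ + ‖Fh uh‖ :=
    norm_le_norm_sub_add ((F uh).comp Yh.subtypeL) (Fh uh)
  calc ‖F uh‖ ≤ ‖(F uh).comp A‖ + ‖Rh‖ * ‖(F uh).comp Yh.subtypeL‖ :=
        norm_le_norm_comp_id_sub_add _ _ _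
    _ ≤ (‖(Fth uh).comp A‖ + ‖(F uh - Fth uh).comp A‖)
          + ‖Rh‖ * (‖(F uh).comp Yh.subtypeL - Fh uh‖ + ‖Fh uh‖) := by
        gcongr
        exact norm_comp_le_norm_comp_add_norm_sub_comp _ _ _
    _ ≤ _ := by linarith

/-- Proposition 3.5 (Verfürth): splitting of the residual dual norm.
`Ytilh` plays the role of the auxiliary space `Ỹ_h`, `Fth` that of `F̃_h`. -/
theorem residual_dual_norm_splitting
    {X Y : Type*} [NormedAddCommGroup X] [NormedSpace ℝ X] [CompleteSpace X]
    [NormedAddCommGroup Y] [NormedSpace ℝ Y] [CompleteSpace Y]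
    (Xh : Submodule ℝ X) (Yh : Submodule ℝ Y)
    (hXh : IsClosed (Xh : Set X)) (hYh : IsClosed (Yh : Set Y))
    (F : X → (Y →L[ℝ] ℝ)) (hF : Continuous F)
    (Fh : Xh → (Yh →L[ℝ] ℝ))
    (Rh : Y →L[ℝ] Yh)
    (Ytilh : Submodule ℝ Y)
    (Fth : Xh → (Y →L[ℝ] ℝ))
    (uh : Xh) (C0 : ℝ) (hC0 : 0 < C0)
    (hbound : ‖(Fth uh).comp (ContinuousLinearMap.id ℝ Y - Yh.subtypeL.comp Rh)‖ ≤
        C0 * ‖(Fth uh).comp Ytilh.subtypeL‖) :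
    ‖F (uh : X)‖ ≤ C0 * ‖(Fth uh).comp Ytilh.subtypeL‖
      + ‖(F (uh : X) - Fth uh).comp (ContinuousLinearMap.id ℝ Y - Yh.subtypeL.comp Rh)‖
      + ‖Rh‖ * ‖(F (uh : X)).comp Yh.subtypeL - Fh uh‖
      + ‖Rh‖ * ‖Fh uh‖ :=
  residual_dual_norm_splitting_general Xh Yh F Fh Rh Ytilh Fth uh C0 hbound
end
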